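/- The level-0 stationary vector annihilates the lumped level-0 generator: π^0 B^0 = 0. -/
import Mathlib


open Matrix

theorem stmt_5
    (M l : ℕ) (hM : 1 ≤ M)
    (Q : Matrix (Fin (M+1) × Fin (l+1)) (Fin (M+1) × Fin (l+1)) ℝ)
    (htri : ∀ (m n : Fin (M+1)) (i j : Fin (l+1)),
      1 < |(m.val : ℤ) - (n.val : ℤ)| → Q (m, i) (n, j) = 0)
    (hrow : ∀ s, ∑ t, Q s t = 0)
    (W U D : ℕ → Matrix (Fin (l+1)) (Fin (l+1)) ℝ)
    (hW : ∀ (m : ℕ) (hm : m ≤ M) (i j : Fin (l+1)),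
      W m i j = Q (⟨m, by omega⟩, i) (⟨m, by omega⟩, j))
    (hU : ∀ (m : ℕ) (hm : m < M) (i j : Fin (l+1)),
      U m i j = Q (⟨m, by omega⟩, i) (⟨m+1, by omega⟩, j))
    (hD : ∀ (m : ℕ) (hm1 : 1 ≤ m) (hm2 : m ≤ M) (i j : Fin (l+1)),
      D m i j = Q (⟨m, by omega⟩, i) (⟨m-1, by omega⟩, j))
    (hDES : ∀ (m : ℕ), 1 ≤ m → m ≤ M → ∀ (i j : Fin (l+1)), j ≠ 0 → D m i j = 0)
    (Ut : ℕ → Matrix (Fin (l+1)) (Fin (l+1)) ℝ)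
    (hUt : ∀ (m : ℕ), m < M → ∀ (i j : Fin (l+1)),
      Ut m i j = if j = 0 then ∑ k, U m i k else 0)
    (hUtM : Ut M = 0)
    (B : ℕ → Matrix (Fin (l+1)) (Fin (l+1)) ℝ)
    (hB : ∀ (m : ℕ), m ≤ M → B m = W m + Ut m)
    (π : Fin (M+1) × Fin (l+1) → ℝ)
    (hπ : Matrix.vecMul π Q = 0) :
    Matrix.vecMul (fun i => π ((0 : Fin (M+1)), i)) (B 0) = 0 := by
  have hM0 : (0:ℕ) < M + 1 := by omega
  have hM1 : (1:ℕ) < M + 1 := by omega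
  have h00 : (0 : Fin (M+1)) = ⟨0, hM0⟩ := by
    apply Fin.ext; simp [Fin.val_zero]
  have h01 : (⟨0, hM0⟩ : Fin (M+1)) ≠ ⟨1, hM1⟩ := by
    simp [Fin.ext_iff]
  -- key: for j ≠ 0, (π^0 W^0)(j) = 0
  have key : ∀ j : Fin (l+1), j ≠ 0 → ∑ i, π (⟨0, hM0⟩, i) * W 0 i j = 0 := by
    intro j hj
    have h : ∑ s, π s * Q s (⟨0, hM0⟩, j) = 0 := by
      have := congrFun hπ (⟨0, hM0⟩, j)
      simpa [Matrix.vecMul, dotProduct] using this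
    rw [Fintype.sum_prod_type] at h
    rw [Finset.sum_eq_single (⟨0, hM0⟩ : Fin (M+1))] at h
    · rw [← h]
      apply Finset.sum_congr rfl
      intro i _
      rw [hW 0 (by omega)]
    · intro m _ hm
      have hmv : m.val ≠ 0 := fun hc => hm (Fin.ext (by simpa using hc))
      apply Finset.sum_eq_zero
      intro i _
      rcases Nat.lt_or_ge m.val 2 with h2 | h2
      · have hm1 : m.val = 1 := by omega
        have : m = ⟨1, hM1⟩ := Fin.ext (by simp only [Fin.val_mk]; omega)
        subst this
        have := hD 1 le_rfl hM i j
        simp only [show (1:ℕ) - 1 = 0 from rfl] at this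
        rw [← this, hDES 1 le_rfl hM i j hj, mul_zero]
      · have habs : (1:ℤ) < |(m.val : ℤ) - ((⟨0, hM0⟩ : Fin (M+1)).val : ℤ)| := by
          simp only [Fin.val_mk, Nat.cast_zero, sub_zero, Nat.abs_cast]
          exact_mod_cast h2
        rw [htri m ⟨0, hM0⟩ i j habs, mul_zero]
    · intro hc; exact absurd (Finset.mem_univ _) hc
  -- row sum: ∑ k U0 i k = -∑ k W0 i k
  have hrow0 : ∀ i : Fin (l+1), ∑ k, U 0 i k = -∑ k, W 0 i k := by
    intro i
    have h : ∑ t, Q (⟨0, hM0⟩, i) t = 0 := hrow _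
    rw [Fintype.sum_prod_type] at h
    have hsub : ∑ m ∈ ({⟨0, hM0⟩, ⟨1, hM1⟩} : Finset (Fin (M+1))),
        ∑ k, Q (⟨0, hM0⟩, i) (m, k) = ∑ m, ∑ k, Q (⟨0, hM0⟩, i) (m, k) := by
      apply Finset.sum_subset (Finset.subset_univ _)
      intro m _ hm
      simp only [Finset.mem_insert, Finset.mem_singleton] at hm
      push_neg at hm
      have : 2 ≤ m.val := by
        rcases hm with ⟨hm0, hm1⟩
        have : m.val ≠ 0 := fun hc => hm0 (Fin.ext (by simpa using hc))
        have : m.val ≠ 1 := fun hc => hm1 (Fin.ext (by simpa using hc))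
        omega
      apply Finset.sum_eq_zero
      intro k _
      refine htri ⟨0, hM0⟩ m i k ?_
      simp only [Fin.val_mk, Nat.cast_zero, zero_sub, abs_neg, Nat.abs_cast]
      exact_mod_cast this
    rw [← hsub, Finset.sum_pair h01] at h
    have e0 : ∑ k, Q (⟨0, hM0⟩, i) ((⟨0, hM0⟩ : Fin (M+1)), k) = ∑ k, W 0 i k := by
      apply Finset.sum_congr rfl; intro k _; rw [hW 0 (by omega)]
    have e1 : ∑ k, Q (⟨0, hM0⟩, i) ((⟨1, hM1⟩ : Fin (M+1)), k) = ∑ k, U 0 i k := by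
      apply Finset.sum_congr rfl; intro k _; rw [hU 0 (by omega)]
    rw [e0, e1] at h
    linarith
  funext j
  rw [hB 0 (by omega)]
  simp only [Matrix.vecMul, dotProduct, Matrix.add_apply, Pi.zero_apply, h00]
  by_cases hj : j = 0
  · subst hj
    have hUt0 : ∀ i k : Fin (l+1), Ut 0 i k = if k = 0 then ∑ k', U 0 i k' else 0 :=
      hUt 0 (by omega)
    have : ∑ i, π (⟨0, hM0⟩, i) * (W 0 i 0 + Ut 0 i 0)
        = ∑ i, π (⟨0, hM0⟩, i) * W 0 i 0 - ∑ k, ∑ i, π (⟨0, hM0⟩, i) * W 0 i k := by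
      rw [Finset.sum_comm (f := fun k i => π (⟨0, hM0⟩, i) * W 0 i k),
        ← Finset.sum_sub_distrib]
      apply Finset.sum_congr rfl
      intro i _
      rw [hUt0, if_pos rfl, hrow0, ← Finset.mul_sum]
      ring
    have h2 : ∑ k, ∑ i, π (⟨0, hM0⟩, i) * W 0 i k
        = ∑ i, π (⟨0, hM0⟩, i) * W 0 i 0 := by
      rw [Finset.sum_eq_single (0 : Fin (l+1))]
      · intro k _ hk; exact key k hk
      · intro hc; exact absurd (Finset.mem_univ _) hc
    rw [this, h2]; ring
  · have : ∑ i, π (⟨0, hM0⟩, i) * (W 0 i j + Ut 0 i j)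
        = ∑ i, π (⟨0, hM0⟩, i) * W 0 i j := by
      apply Finset.sum_congr rfl
      intro i _
      rw [hUt 0 (by omega), if_neg hj, add_zero]
    rw [this, key j hj]
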